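/- Let c_p, c_h ∈ ℝ, let d ∈ ℝ, let f : ℝ^n → ℝ be differentiable at a point w₀ ∈ ℝ^n, and define the quadratic newsvendor training loss E : ℝ^n → ℝ by E(w) = (1/2)·(c_p · (d − f(w))^+)² + (1/2)·(c_h · (f(w) − d)^+)², where (a)^+ = max{a, 0}. Then E is differentiable at w₀ (including when f(w₀) = d), and its gradient at w₀ equals −c_p² · (d − f(w₀)) · ∇f(w₀) if f(w₀) < d, equals c_h² · (f(w₀) − d) · ∇f(w₀) if f(w₀) > d, and equals 0 if f(w₀) = d. -/

import Mathlib

/-!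
On the reals, `y ↦ (max y 0)²` is differentiable everywhere with derivative `2 max y 0`: away
from `0` it is locally `0` or `y²`, and at `0` it is squeezed by `y² = o(y)`. The loss is
`½ c_p² ((d - y)⁺)² + ½ c_h² ((y - d)⁺)²` composed with `f`, so the chain rule gives the gradient
`(c_h² (f w₀ - d)⁺ - c_p² (d - f w₀)⁺) • ∇f(w₀)`, which specialises to the three cases.
-/

open Asymptotics Filter Topology

theorem hasDerivAt_max_zero_sq (a : ℝ) :
    HasDerivAt (fun y : ℝ => max y 0 ^ 2) (2 * max a 0) a := by
  rcases lt_trichotomy a 0 with ha | rfl | ha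
  · have hzero : (fun y : ℝ => max y 0 ^ 2) =ᶠ[𝓝 a] fun _ => 0 := by
      filter_upwards [Iio_mem_nhds ha] with y hy
      simp [max_eq_right (Set.mem_Iio.mp hy).le]
    simpa [max_eq_right ha.le] using (hasDerivAt_const a (0 : ℝ)).congr_of_eventuallyEq hzero
  · rw [hasDerivAt_iff_isLittleO]
    have hbound : (fun y : ℝ => max y 0 ^ 2) =O[𝓝 0] fun y => y ^ 2 :=
      isBigO_of_le _ fun y => by
        rw [norm_pow, norm_pow]
        gcongr
        rcases le_total y 0 with hy | hy <;> simp [hy]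
    simpa using hbound.trans_isLittleO (isLittleO_pow_id one_lt_two)
  · have hsq : (fun y : ℝ => max y 0 ^ 2) =ᶠ[𝓝 a] fun y => y ^ 2 := by
      filter_upwards [Ioi_mem_nhds ha] with y hy
      simp [max_eq_left (Set.mem_Ioi.mp hy).le]
    simpa [max_eq_left ha.le] using (hasDerivAt_pow 2 a).congr_of_eventuallyEq hsq

noncomputable def quadNewsvendorLoss (c_p c_h d y : ℝ) : ℝ :=
  (1 / 2) * (c_p * max (d - y) 0) ^ 2 + (1 / 2) * (c_h * max (y - d) 0) ^ 2

theorem hasDerivAt_quadNewsvendorLoss (c_p c_h d y : ℝ) :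
    HasDerivAt (quadNewsvendorLoss c_p c_h d)
      (c_h ^ 2 * max (y - d) 0 - c_p ^ 2 * max (d - y) 0) y := by
  have hloss : quadNewsvendorLoss c_p c_h d =
      fun z => (1 / 2 * c_p ^ 2) * max (d - z) 0 ^ 2 + (1 / 2 * c_h ^ 2) * max (z - d) 0 ^ 2 := by
    ext z
    simp only [quadNewsvendorLoss, mul_pow]
    ring
  have hshortage := (hasDerivAt_max_zero_sq (d - y)).comp y ((hasDerivAt_id y).const_sub d)
  have hexcess := (hasDerivAt_max_zero_sq (y - d)).comp y ((hasDerivAt_id y).sub_const d)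
  rw [hloss]
  exact ((hshortage.const_mul (1 / 2 * c_p ^ 2)).add
    (hexcess.const_mul (1 / 2 * c_h ^ 2))).congr_deriv (by ring)

/-- Proposition 2: the gradient of the quadratic newsvendor loss
`E(w) = ½ (c_p (d - f w)⁺)² + ½ (c_h (f w - d)⁺)²`, which is differentiable
everywhere (including where `f w₀ = d`). -/
theorem quadratic_newsvendor_loss_gradient {n : ℕ} (c_p c_h : ℝ)
    (d : ℝ) (f : (Fin n → ℝ) → ℝ) (w₀ : Fin n → ℝ) (hf : DifferentiableAt ℝ f w₀)
    (E : (Fin n → ℝ) → ℝ)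
    (hE : ∀ w, E w = (1 / 2) * (c_p * max (d - f w) 0) ^ 2
        + (1 / 2) * (c_h * max (f w - d) 0) ^ 2) :
    DifferentiableAt ℝ E w₀ ∧
      (f w₀ < d → fderiv ℝ E w₀ = (-(c_p ^ 2 * (d - f w₀))) • fderiv ℝ f w₀) ∧
      (d < f w₀ → fderiv ℝ E w₀ = (c_h ^ 2 * (f w₀ - d)) • fderiv ℝ f w₀) ∧
      (f w₀ = d → fderiv ℝ E w₀ = 0) := by
  have hE_comp : E = quadNewsvendorLoss c_p c_h d ∘ f := funext hE
  have hE_deriv : HasFDerivAt E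
      ((c_h ^ 2 * max (f w₀ - d) 0 - c_p ^ 2 * max (d - f w₀) 0) • fderiv ℝ f w₀) w₀ := by
    rw [hE_comp]
    exact (hasDerivAt_quadNewsvendorLoss c_p c_h d (f w₀)).comp_hasFDerivAt w₀ hf.hasFDerivAt
  refine ⟨hE_deriv.differentiableAt, fun hlt => ?_, fun hgt => ?_, fun heq => ?_⟩
  · rw [hE_deriv.fderiv, max_eq_left (sub_nonneg.mpr hlt.le),
      max_eq_right (sub_nonpos.mpr hlt.le)]
    ring_nf
  · rw [hE_deriv.fderiv, max_eq_left (sub_nonneg.mpr hgt.le),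
      max_eq_right (sub_nonpos.mpr hgt.le)]
    ring_nf
  · simp [hE_deriv.fderiv, heq]
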